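/- Let n ≥ 1 and let A ⊂ ℝⁿ be a bounded set. Assume there exists ρ > 0 such that for every x in the topological boundary ∂A there is an open ball B ⊂ ℝⁿ of radius ρ with x ∈ ∂B and B ⊂ A. Then ∂A has n-dimensional Lebesgue measure zero. -/

import Mathlib

open MeasureTheory Real Filter Metric Asymptotics
open scoped ENNReal NNReal Topology ComplexConjugate

noncomputable section

/-- `ℝ^d` as a Euclidean space. -/
abbrev Euc (d : ℕ) : Type := EuclideanSpace ℝ (Fin d)

/-- `ω_k`, the Lebesgue measure of the unit ball in `ℝ^k`. -/
def ballVol (k : ℕ) : ℝ := (volume (Metric.ball (0 : Euc k) 1)).toReal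

/-- The semiclassical constant `L¹_k = (2/(k+2))·(2π)^{-k}·ω_k`. -/
def weylL1 (k : ℕ) : ℝ := (2 / ((k : ℝ) + 2)) * (2 * π) ^ (-(k : ℝ)) * ballVol k

/-- `|𝕊^{d-2}|`, the surface measure of the unit sphere in `ℝ^{d-1}`. -/
def sphereArea (d : ℕ) : ℝ := (μH[(d : ℝ) - 2] (Metric.sphere (0 : Euc (d - 1)) 1)).toReal

/-- The constant `C_d = 4·|𝕊^{d-2}|·(2π)^{-d}·(d²-1)⁻¹`. -/
def constCd (d : ℕ) : ℝ := 4 * sphereArea d * (2 * π) ^ (-(d : ℝ)) * ((d : ℝ) ^ 2 - 1)⁻¹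

/-- Negative part `x₋ = max(-x,0)`. -/
def nPart (x : ℝ) : ℝ := max (-x) 0

/-- The boundary coefficient `L²_d(b)`. -/
def weylL2 (d : ℕ) (b : ℝ) : ℝ :=
  if 0 < b then
    constCd d * (-(π / 4) +
      ∫ p in (0 : ℝ)..1, (1 - p ^ 2) ^ (((d : ℝ) + 1) / 2) * b / (b ^ 2 + p ^ 2))
  else if b = 0 then constCd d * (π / 4)
  else
    constCd d * (-(π / 4) +
      (∫ p in (0 : ℝ)..1, (1 - p ^ 2) ^ (((d : ℝ) + 1) / 2) * b / (b ^ 2 + p ^ 2)) +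
      π * (b ^ 2 + 1) ^ (((d : ℝ) + 1) / 2))

/-- First `d-1` coordinates `x'` of `x ∈ ℝ^d`. -/
def firstCoords (d : ℕ) (x : Euc d) : Euc (d - 1) :=
  WithLp.toLp 2 fun i => x (Fin.castLE (Nat.sub_le d 1) i)

/-- Last coordinate `x_d` of `x ∈ ℝ^d`. -/
def lastCoord (d : ℕ) (x : Euc d) : ℝ :=
  if h : 0 < d then x ⟨d - 1, Nat.sub_lt h Nat.one_pos⟩ else 0

/-- The point `(x',0) ∈ ℝ^d` corresponding to `x' ∈ ℝ^{d-1}`. -/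
def embedBdry (d : ℕ) (x' : Euc (d - 1)) : Euc d :=
  WithLp.toLp 2 fun i => if h : (i : ℕ) < d - 1 then x' ⟨(i : ℕ), h⟩ else 0

/-- The open region above the graph of `f : ℝ^{d-1} → ℝ`. -/
def upperGraph (d : ℕ) (f : Euc (d - 1) → ℝ) : Set (Euc d) :=
  {x | f (firstCoords d x) < lastCoord d x}

/-- The upper half-space `ℝ^d_+`. -/
def upperHalf (d : ℕ) : Set (Euc d) := {x | 0 < lastCoord d x}

/-- The boundary-straightening map `(x',x_d) ↦ (x', x_d - f(x'))`. -/
def straighten (d : ℕ) (f : Euc (d - 1) → ℝ) (x : Euc d) : Euc d :=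
  WithLp.toLp 2 fun i => if (i : ℕ) < d - 1 then x i else x i - f (firstCoords d x)

/-- `Ω` has `C¹` boundary with modulus of continuity `ω` for the gradients of the local charts:
at every boundary point there is an orthonormal coordinate system (an affine isometry `A`
centered at `x₀`), a radius `r > 0` and a `C¹` graph function `f` with `f 0 = 0`, `∇f(0) = 0`,
whose gradient has modulus of continuity `ω`, representing `Ω` locally as the region above
the graph of `f`. -/
def IsC1BoundaryWith (d : ℕ) (Ω : Set (Euc d)) (ω : ℝ → ℝ) : Prop :=
  ∀ x₀ ∈ frontier Ω, ∃ (A : Euc d ≃ᵃⁱ[ℝ] Euc d) (r : ℝ) (f : Euc (d - 1) → ℝ),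
    A 0 = x₀ ∧ 0 < r ∧ ContDiff ℝ 1 f ∧ f 0 = 0 ∧ fderiv ℝ f 0 = 0 ∧
    (∀ x' y', ‖fderiv ℝ f x' - fderiv ℝ f y'‖ ≤ ω (dist x' y')) ∧
    Ω ∩ Metric.ball x₀ r = (A '' upperGraph d f) ∩ Metric.ball x₀ r

/-- `Ω` has uniform `C¹` boundary: there is a common modulus of continuity, vanishing at `0`,
for the gradients of all local charts. -/
def HasC1Boundary (d : ℕ) (Ω : Set (Euc d)) : Prop :=
  ∃ ω : ℝ → ℝ, Monotone ω ∧ Tendsto ω (𝓝[>] (0 : ℝ)) (𝓝 0) ∧ IsC1BoundaryWith d Ω ω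

/-- `Ω` has Lipschitz boundary. -/
def HasLipschitzBoundary (d : ℕ) (Ω : Set (Euc d)) : Prop :=
  ∀ x₀ ∈ frontier Ω, ∃ (A : Euc d ≃ᵃⁱ[ℝ] Euc d) (r : ℝ) (f : Euc (d - 1) → ℝ) (K : ℝ≥0),
    A 0 = x₀ ∧ 0 < r ∧ LipschitzWith K f ∧
    Ω ∩ Metric.ball x₀ r = (A '' upperGraph d f) ∩ Metric.ball x₀ r

/-- `|∇w|²` for a complex-valued function `w`, i.e. `|∇(Re w)|² + |∇(Im w)|²`. -/
def gradSqC (d : ℕ) (w : Euc d → ℂ) (x : Euc d) : ℝ :=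
  ‖gradient (fun y => (w y).re) x‖ ^ 2 + ‖gradient (fun y => (w y).im) x‖ ^ 2

/-- `Tr(H(b))₋`: the variational trace of the negative part of the Robin operator
`h²(-Δ) - 1` on `Ω` with boundary coefficient `b`. -/
def robinTrace (d : ℕ) (Ω : Set (Euc d)) (b : Euc d → ℝ) (h : ℝ) : ℝ :=
  sSup {T : ℝ | ∃ (N : ℕ) (v : Fin N → Euc d → ℂ),
    (∀ j, ContDiff ℝ 1 (v j)) ∧
    (∀ j k, (∫ x in Ω, conj (v j x) * v k x) = if j = k then 1 else 0) ∧
    T = ∑ j, ((∫ x in Ω, ‖v j x‖ ^ 2)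
        - h ^ 2 * (∫ x in Ω, gradSqC d (v j) x)
        - h * (∫ x in frontier Ω, b x * ‖v j x‖ ^ 2 ∂(μH[(d : ℝ) - 1])))}

/-- `Tr(φ H(b) φ)₋`: variational trace of the localized Robin operator on `Ω`. -/
def locTrace (d : ℕ) (Ω : Set (Euc d)) (b : Euc d → ℝ) (φ : Euc d → ℝ) (h : ℝ) : ℝ :=
  sSup {T : ℝ | ∃ (N : ℕ) (v : Fin N → Euc d → ℂ),
    (∀ j, ContDiff ℝ 1 (v j)) ∧
    (∀ j k, (∫ x in Ω, conj (v j x) * v k x) = if j = k then 1 else 0) ∧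
    T = ∑ j, ((∫ x in Ω, φ x ^ 2 * ‖v j x‖ ^ 2)
        - h ^ 2 * (∫ x in Ω, gradSqC d (fun y => (φ y : ℂ) * v j y) x)
        - h * (∫ x in frontier Ω,
            b x * (φ x ^ 2 * ‖v j x‖ ^ 2) ∂(μH[(d : ℝ) - 1])))}

/-- `Tr(φ(-Δ_b - Λ)φ)₋`: variational trace of the localized Robin operator at energy `Λ`. -/
def locTraceL (d : ℕ) (Ω : Set (Euc d)) (b : Euc d → ℝ) (φ : Euc d → ℝ) (Λ : ℝ) : ℝ :=
  sSup {T : ℝ | ∃ (N : ℕ) (v : Fin N → Euc d → ℂ),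
    (∀ j, ContDiff ℝ 1 (v j)) ∧
    (∀ j k, (∫ x in Ω, conj (v j x) * v k x) = if j = k then 1 else 0) ∧
    T = ∑ j, (Λ * (∫ x in Ω, φ x ^ 2 * ‖v j x‖ ^ 2)
        - (∫ x in Ω, gradSqC d (fun y => (φ y : ℂ) * v j y) x)
        - (∫ x in frontier Ω,
            b x * (φ x ^ 2 * ‖v j x‖ ^ 2) ∂(μH[(d : ℝ) - 1])))}

/-- `Tr(φ(-h²Δ-1)φ)₋` on all of `ℝ^d` (no boundary). -/
def freeTrace (d : ℕ) (φ : Euc d → ℝ) (h : ℝ) : ℝ :=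
  sSup {T : ℝ | ∃ (N : ℕ) (v : Fin N → Euc d → ℂ),
    (∀ j, ContDiff ℝ 1 (v j)) ∧
    (∀ j k, (∫ x, conj (v j x) * v k x) = if j = k then 1 else 0) ∧
    T = ∑ j, ((∫ x, φ x ^ 2 * ‖v j x‖ ^ 2)
        - h ^ 2 * (∫ x, gradSqC d (fun y => (φ y : ℂ) * v j y) x))}

/-- `Tr(φ H⁺(b) φ)₋`: variational trace of the localized Robin operator on the half-space. -/
def halfTrace (d : ℕ) (b : ℝ) (φ : Euc d → ℝ) (h : ℝ) : ℝ :=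
  sSup {T : ℝ | ∃ (N : ℕ) (v : Fin N → Euc d → ℂ),
    (∀ j, ContDiff ℝ 1 (v j)) ∧
    (∀ j k, (∫ x in upperHalf d, conj (v j x) * v k x) = if j = k then 1 else 0) ∧
    T = ∑ j, ((∫ x in upperHalf d, φ x ^ 2 * ‖v j x‖ ^ 2)
        - h ^ 2 * (∫ x in upperHalf d, gradSqC d (fun y => (φ y : ℂ) * v j y) x)
        - h * b * (∫ x' : Euc (d - 1),
            φ (embedBdry d x') ^ 2 * ‖v j (embedBdry d x')‖ ^ 2))}

/-- The generalized eigenfunction `ψ_b(t)`. -/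
def psiF (b t : ℝ) : ℝ := (Real.cos t + b * Real.sin t) / Real.sqrt (1 + b ^ 2)

/-- The bound state `Ψ_b(t)` (vanishing for `b ≥ 0`). -/
def psiBig (b t : ℝ) : ℝ := if b < 0 then Real.sqrt (-2 * b) * Real.exp (b * t) else 0

/-- The function `I_b(t)`. -/
def Ifun (d : ℕ) (b t : ℝ) : ℝ :=
  ∫ p in (0 : ℝ)..1, (1 - p ^ 2) ^ (((d : ℝ) + 1) / 2) *
    ((p ^ 2 - b ^ 2) / (p ^ 2 + b ^ 2) * Real.cos (2 * t * p) +
      2 * p * b / (p ^ 2 + b ^ 2) * Real.sin (2 * t * p))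

/-- The localization scale `l(u) = ½(1 + (dist(u,Ωᶜ)² + l₀²)^{-1/2})⁻¹`. -/
def radFun (d : ℕ) (Ω : Set (Euc d)) (l₀ : ℝ) (u : Euc d) : ℝ :=
  (1 / 2) * (1 + (Real.sqrt (Metric.infDist u Ωᶜ ^ 2 + l₀ ^ 2))⁻¹)⁻¹

end

/-!
Every boundary point `x` of `A` is a porosity point of `∂A`: if `B(c, ρ) ⊆ A` is tangent at `x`,
then for `0 < r ≤ 2ρ` the ball of radius `r / 2` centred on the segment `[x, c]` at distance
`r / 2` from `x` lies in `B̄(x, r) ∩ B(c, ρ) ⊆ B̄(x, r) ∩ int A`, so it misses `∂A`. Hence the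
density of `∂A` in `B̄(x, r)` stays below `1 - 2⁻ⁿ` as `r → 0`, whereas by the Lebesgue density
theorem it tends to `1` at almost every point of `∂A`.
-/

section Porosity

variable {E : Type*} [NormedAddCommGroup E]

def PorousAt (s : Set E) (x : E) : Prop :=
  ∃ ε > 0, ∀ᶠ r in 𝓝[>] (0 : ℝ), ∃ y, ball y (ε * r) ⊆ closedBall x r \ s

variable [NormedSpace ℝ E] [FiniteDimensional ℝ E] [MeasurableSpace E] [BorelSpace E]
  (μ : Measure E) [μ.IsAddHaarMeasure]

open Module

theorem measure_inter_closedBall_div_le_of_ball_subset_diff {s : Set E} {x y : E} {ε r : ℝ}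
    (hε : 0 < ε) (hr : 0 < r) (hy : ball y (ε * r) ⊆ closedBall x r \ s) :
    μ (s ∩ closedBall x r) / μ (closedBall x r) ≤ 1 - ENNReal.ofReal (ε ^ finrank ℝ E) := by
  set V := μ (closedBall x r) with hV
  have hV0 : V ≠ 0 := (measure_closedBall_pos μ x hr).ne'
  have hVtop : V ≠ ∞ := measure_closedBall_lt_top.ne
  have hhole : μ (ball y (ε * r)) = ENNReal.ofReal (ε ^ finrank ℝ E) * V := by
    rw [hV, Measure.addHaar_ball_of_pos μ y (by positivity), Measure.addHaar_closedBall μ x hr.le,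
      mul_pow, ENNReal.ofReal_mul (by positivity), mul_assoc]
  have hdisj : Disjoint (s ∩ closedBall x r) (ball y (ε * r)) :=
    Set.disjoint_of_subset_left Set.inter_subset_left
      (Set.disjoint_of_subset_right hy Set.disjoint_sdiff_right)
  have hadd : μ (s ∩ closedBall x r) + ENNReal.ofReal (ε ^ finrank ℝ E) * V ≤ V := by
    rw [← hhole, ← measure_union hdisj measurableSet_ball]
    exact measure_mono (Set.union_subset Set.inter_subset_right (hy.trans Set.sdiff_subset))
  rw [ENNReal.div_le_iff hV0 hVtop, ENNReal.sub_mul fun _ _ => hVtop, one_mul]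
  exact ENNReal.le_sub_of_add_le_right (by finiteness) hadd

theorem PorousAt.not_tendsto_density {s : Set E} {x : E} (hs : PorousAt s x) :
    ¬ Tendsto (fun r => μ (s ∩ closedBall x r) / μ (closedBall x r)) (𝓝[>] 0) (𝓝 1) := by
  intro hlim
  obtain ⟨ε, hε, hholes⟩ := hs
  have hbound : ∀ᶠ r in 𝓝[>] (0 : ℝ),
      μ (s ∩ closedBall x r) / μ (closedBall x r) ≤ 1 - ENNReal.ofReal (ε ^ finrank ℝ E) := by
    filter_upwards [hholes, self_mem_nhdsWithin] with r ⟨y, hy⟩ hr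
    exact measure_inter_closedBall_div_le_of_ball_subset_diff μ hε hr hy
  refine (le_of_tendsto hlim hbound).not_gt ?_
  exact ENNReal.sub_lt_self ENNReal.one_ne_top one_ne_zero (by simp; positivity)

theorem measure_eq_zero_of_forall_porousAt {s : Set E} (hs : ∀ x ∈ s, PorousAt s x) :
    μ s = 0 := by
  have hdensity := Besicovitch.ae_tendsto_measure_inter_div μ s
  rw [ae_iff] at hdensity
  -- `s` need not be measurable, hence `le_restrict_apply` rather than `ae_restrict_iff'`.
  refine measure_mono_null (fun x hx => ?_)
    (le_zero_iff.1 ((μ.le_restrict_apply s _).trans_eq hdensity))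
  exact ⟨(hs x hx).not_tendsto_density μ, hx⟩

end Porosity

section TangentBall

variable {E : Type*} [NormedAddCommGroup E] [NormedSpace ℝ E]

theorem exists_ball_subset_closedBall_inter_ball_of_mem_sphere {x c : E} {ρ r : ℝ}
    (hx : x ∈ sphere c ρ) (hr : 0 < r) (hrρ : r ≤ 2 * ρ) :
    ∃ y, ball y (r / 2) ⊆ closedBall x r ∩ ball c ρ := by
  have hρ : 0 < ρ := by linarith
  have hxc : dist x c = ρ := hx
  set t := r / (2 * ρ)
  have ht : t ≤ 1 := (div_le_one (by positivity)).2 hrρ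
  have htρ : t * ρ = r / 2 := by simp only [t]; field_simp
  refine ⟨AffineMap.lineMap x c t, Set.subset_inter ?_ ?_⟩
  · refine (ball_subset_ball' ?_).trans ball_subset_closedBall
    rw [dist_lineMap_left, Real.norm_of_nonneg (by positivity), hxc, htρ]
    linarith
  · refine ball_subset_ball' ?_
    rw [dist_lineMap_right, Real.norm_of_nonneg (by linarith), hxc, sub_mul, one_mul, htρ]
    linarith

theorem porousAt_frontier_of_mem_sphere_of_ball_subset {A : Set E} {x c : E} {ρ : ℝ}
    (hρ : 0 < ρ) (hx : x ∈ sphere c ρ) (hA : ball c ρ ⊆ A) : PorousAt (frontier A) x := by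
  refine ⟨1 / 2, one_half_pos, ?_⟩
  filter_upwards [Ioc_mem_nhdsGT (by positivity : (0 : ℝ) < 2 * ρ)] with r ⟨hr, hrρ⟩
  obtain ⟨y, hy⟩ := exists_ball_subset_closedBall_inter_ball_of_mem_sphere hx hr hrρ
  refine ⟨y, fun z hz => ?_⟩
  rw [one_div_mul_eq_div] at hz
  obtain ⟨hzx, hzc⟩ := hy hz
  exact ⟨hzx, Set.disjoint_left.1 disjoint_interior_frontier (interior_maximal hA isOpen_ball hzc)⟩

end TangentBall

theorem interior_ball_boundary_null_general (n : ℕ) (A : Set (Euc n))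
    (ρ : ℝ) (hρ : 0 < ρ)
    (hball : ∀ x ∈ frontier A, ∃ c : Euc n,
      x ∈ Metric.sphere c ρ ∧ Metric.ball c ρ ⊆ A) :
    volume (frontier A) = 0 :=
  measure_eq_zero_of_forall_porousAt volume fun x hx =>
    let ⟨_, hxc, hcA⟩ := hball x hx
    porousAt_frontier_of_mem_sphere_of_ball_subset hρ hxc hcA

/-- **Interior ball condition implies null boundary** (Lemma A.2 of Frank–Geisinger):
if a bounded set `A ⊂ ℝⁿ` admits at every boundary point an interior tangent ball of a
fixed radius `ρ > 0`, then `∂A` has Lebesgue measure zero. -/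
theorem interior_ball_boundary_null (n : ℕ) (hn : 1 ≤ n) (A : Set (Euc n))
    (hA : Bornology.IsBounded A) (ρ : ℝ) (hρ : 0 < ρ)
    (hball : ∀ x ∈ frontier A, ∃ c : Euc n,
      x ∈ Metric.sphere c ρ ∧ Metric.ball c ρ ⊆ A) :
    volume (frontier A) = 0 :=
  interior_ball_boundary_null_general n A ρ hρ hball
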